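/- arXiv:2305.18642 — 3 statements merged into one kernel-verified Lean document; each statement's English description precedes it below -/
import Mathlib

section
/- Let 0 < p < 1, m ∈ ℕ with m ≥ 1, and N ∈ ℕ with N ≥ m · e^{(log(3^8·e)/(2p))·m − 1}. Then for every adaptive sampling operator Γ : ℓ^2_N → ℝ^m and every map Δ : ℝ^m → ℝ^N, the worst-case ℓ^2 recovery error over the ℓ^p quasi-norm unit ball satisfies sup_{x ∈ B^p_N} ‖x − Δ(Γ(x))‖_2 ≥ (1/2)^{2/p − 1/2}. In particular, this lower bound does not decay as m → ∞. -/
/-!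
The first-step functionals `x ↦ L i x 0` of an adaptive `Γ` have a common kernel `V` of
codimension at most `m`, and `Γ` vanishes on `V`. For `z ∈ V` the points `z` and `-z` are
therefore indistinguishable, so one of them is recovered with error at least `‖z‖`; it
remains to find `z ∈ V` in the `ℓ^p` ball with large `ℓ²` norm.

Suppose no point of `V` is `ℓ^p`-close (`‖·‖_p^p < 1/4`) to any `e_i - e_j`. Then in
`ℓ²_N ⧸ V` the translates by the `e_i` of the image of `{‖x‖_p^p < 1/8}` are pairwise disjoint
and lie inside its dilate by `9^{1/p}`, and comparing Haar volumes gives `N ≤ 9^{m/p}`,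
which the lower bound on `N` rules out. A point `v ∈ V` close to `e_i - e_j` has
`‖v‖_2 ≥ √2 - 1/2` and `‖v‖_p^p ≤ 9/4`, and `(4/9)^{1/p} • v` is the required `z`.
-/

open Finset

noncomputable section

/-- `Γ : X → ℝ^m` is an adaptive sampling operator: there are maps
`L i : X × ℝ^i → ℝ`, bounded and linear in the first argument, such that the `i`-th
sample `Γ(x) i` equals `L i` applied to `x` and the previous samples. -/
def IsAdaptive {X : Type*} [NormedAddCommGroup X] [NormedSpace ℝ X] {m : ℕ}
    (Γ : X → (Fin m → ℝ)) : Prop :=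
  ∃ L : (i : Fin m) → X → (Fin i.val → ℝ) → ℝ,
    (∀ i v, IsBoundedLinearMap ℝ fun x => L i x v) ∧
    ∀ x i, Γ x i = L i x fun j => Γ x ⟨j.val, j.isLt.trans i.isLt⟩

lemma IsAdaptive.exists_submodule {X : Type*} [NormedAddCommGroup X] [NormedSpace ℝ X] {m : ℕ}
    {Γ : X → (Fin m → ℝ)} (hΓ : IsAdaptive Γ) :
    ∃ V : Submodule ℝ X, Module.finrank ℝ (X ⧸ V) ≤ m ∧ ∀ x ∈ V, Γ x = 0 := by
  obtain ⟨L, hlin, hL⟩ := hΓ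
  let T : X →ₗ[ℝ] (Fin m → ℝ) := LinearMap.pi fun i => (hlin i 0).toLinearMap
  refine ⟨LinearMap.ker T, ?_, fun x hx => ?_⟩
  · rw [T.quotKerEquivRange.finrank_eq]
    simpa using Submodule.finrank_le (LinearMap.range T)
  · have hTx : ∀ i, L i x 0 = 0 := fun i => congr_fun (LinearMap.mem_ker.1 hx) i
    -- once the earlier samples vanish, the next one is `L i x 0 = 0`
    have hsample : ∀ n (hn : n < m), Γ x ⟨n, hn⟩ = 0 := by
      intro n
      induction n using Nat.strong_induction_on with
      | _ n ih =>
        intro hn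
        rw [hL]
        convert hTx ⟨n, hn⟩
        exact ih _ (Fin.isLt _) _
    funext i
    exact hsample i i.isLt

lemma norm_le_norm_sub_or_norm_le_norm_neg_sub {E : Type*} [SeminormedAddCommGroup E]
    [NormedSpace ℝ E] (z a : E) :
    ‖z‖ ≤ ‖z - a‖ ∨ ‖z‖ ≤ ‖-z - a‖ := by
  by_contra! h
  have hsum : ‖z + z‖ ≤ ‖z - a‖ + ‖-z - a‖ := by
    simpa [sub_sub_sub_cancel_right, sub_neg_eq_add] using norm_sub_le (z - a) (-z - a)
  have htwo : ‖z + z‖ = 2 * ‖z‖ := by rw [← two_smul ℝ z, norm_smul]; norm_num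
  linarith [h.1, h.2]

/-- `‖x‖_p^p`; unlike the quasi-norm `‖x‖_p`, it is subadditive for `p ≤ 1`. -/
def lpPow {ι : Type*} [Fintype ι] (p : ℝ) (x : EuclideanSpace ℝ ι) : ℝ := ∑ i, |x i| ^ p

namespace lpPow

variable {ι : Type*} [Fintype ι] {p : ℝ}

lemma nonneg (x : EuclideanSpace ℝ ι) : 0 ≤ lpPow p x :=
  sum_nonneg fun _ _ => by positivity

lemma zero (hp : p ≠ 0) : lpPow p (0 : EuclideanSpace ℝ ι) = 0 := by
  simp [lpPow, Real.zero_rpow hp]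

lemma neg (x : EuclideanSpace ℝ ι) : lpPow p (-x) = lpPow p x := by
  simp [lpPow]

lemma smul (c : ℝ) (x : EuclideanSpace ℝ ι) : lpPow p (c • x) = |c| ^ p * lpPow p x := by
  simp only [lpPow, mul_sum, PiLp.smul_apply, smul_eq_mul, abs_mul,
    Real.mul_rpow (abs_nonneg _) (abs_nonneg _)]

lemma add_le (hp0 : 0 ≤ p) (hp1 : p ≤ 1) (x y : EuclideanSpace ℝ ι) :
    lpPow p (x + y) ≤ lpPow p x + lpPow p y := by
  rw [lpPow, lpPow, lpPow, ← sum_add_distrib]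
  gcongr with i
  exact (Real.rpow_le_rpow (abs_nonneg _) (abs_add_le _ _) hp0).trans
    (Real.rpow_add_le_add_rpow (abs_nonneg _) (abs_nonneg _) hp0 hp1)

lemma sub_le (hp0 : 0 ≤ p) (hp1 : p ≤ 1) (x y : EuclideanSpace ℝ ι) :
    lpPow p (x - y) ≤ lpPow p x + lpPow p y := by
  simpa [sub_eq_add_neg, neg] using add_le hp0 hp1 x (-y)

lemma single [DecidableEq ι] (hp : p ≠ 0) (i : ι) :
    lpPow p (EuclideanSpace.single i (1 : ℝ)) = 1 := by
  simp [lpPow, apply_ite (fun t : ℝ => |t| ^ p), Real.zero_rpow hp]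

lemma continuous (hp : 0 < p) : Continuous (lpPow (ι := ι) p) :=
  continuous_finsetSum _ fun i _ =>
    ((PiLp.continuous_apply 2 _ i).abs).rpow_const fun _ => Or.inr hp.le

lemma norm_sq_le (hp0 : 0 < p) (hp2 : p ≤ 2) {x : EuclideanSpace ℝ ι} (hx : lpPow p x ≤ 1) :
    ‖x‖ ^ 2 ≤ lpPow p x := by
  rw [EuclideanSpace.norm_sq_eq, lpPow]
  gcongr with i
  have hxi : |x i| ≤ 1 := by
    have : |x i| ^ p ≤ 1 := (single_le_sum (fun j _ => by positivity) (mem_univ i)).trans hx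
    by_contra! h
    exact (Real.one_lt_rpow h hp0).not_ge this
  rw [Real.norm_eq_abs, ← Real.rpow_two]
  exact Real.rpow_le_rpow_of_exponent_ge' (abs_nonneg _) hxi hp0.le hp2

open Pointwise in
lemma smul_setOf_lt {t : ℝ} (ht : 0 < t) (s : ℝ) :
    t • {x : EuclideanSpace ℝ ι | lpPow p x < s} = {x | lpPow p x < t ^ p * s} := by
  ext x
  rw [Set.mem_smul_set_iff_inv_smul_mem₀ ht.ne', Set.mem_ofPred_eq, Set.mem_ofPred_eq, smul,
    abs_of_pos (inv_pos.2 ht), Real.inv_rpow ht.le, inv_mul_lt_iff₀ (by positivity)]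

end lpPow

lemma EuclideanSpace.norm_single_sub_single {ι : Type*} [Fintype ι] [DecidableEq ι] {i j : ι}
    (hij : i ≠ j) :
    ‖EuclideanSpace.single i (1 : ℝ) - EuclideanSpace.single j (1 : ℝ)‖ = √2 := by
  rw [← Real.sqrt_sq (norm_nonneg _), norm_sub_sq_real]
  simp [EuclideanSpace.inner_single_left, hij]
  norm_num

open Function MeasureTheory Pointwise in
lemma card_le_pow_finrank_of_pairwiseDisjoint_vadd {F ι : Type*} [NormedAddCommGroup F]
    [NormedSpace ℝ F] [FiniteDimensional ℝ F] [Fintype ι] {U : Set F} (hUo : IsOpen U)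
    (hUne : U.Nonempty) (hUb : Bornology.IsBounded U) {r : ℝ} (hr : 0 ≤ r) (a : ι → F)
    (hdisj : Pairwise (Disjoint on fun i => a i +ᵥ U)) (hsub : ∀ i, a i +ᵥ U ⊆ r • U) :
    (Fintype.card ι : ℝ) ≤ r ^ Module.finrank ℝ F := by
  let _ : MeasurableSpace F := borel F
  have _ : BorelSpace F := ⟨rfl⟩
  let μ : Measure F := Measure.addHaar
  have hμ0 : μ U ≠ 0 := (hUo.measure_pos μ hUne).ne'
  have hμtop : μ U ≠ ⊤ := hUb.measure_lt_top.ne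
  have hcount :
      (Fintype.card ι : ENNReal) * μ U ≤ ENNReal.ofReal (r ^ Module.finrank ℝ F) * μ U :=
    calc (Fintype.card ι : ENNReal) * μ U = ∑ i, μ (a i +ᵥ U) := by
          simp [measure_vadd]
      _ = μ (⋃ i, a i +ᵥ U) :=
          (measure_iUnion hdisj fun i => (hUo.vadd (a i)).measurableSet).trans
            (tsum_fintype _) |>.symm
      _ ≤ μ (r • U) := measure_mono (Set.iUnion_subset hsub)
      _ = ENNReal.ofReal (r ^ Module.finrank ℝ F) * μ U := Measure.addHaar_smul_of_nonneg μ hr U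
  have := (ENNReal.mul_le_mul_iff_left hμ0 hμtop).1 hcount
  rwa [← ENNReal.ofReal_natCast, ENNReal.ofReal_le_ofReal_iff (by positivity)] at this

section Packing

variable {ι : Type*} [Fintype ι] {p : ℝ}

open Function Pointwise in
lemma exists_mem_lpPow_sub_single_sub_single_lt [DecidableEq ι] (hp0 : 0 < p) (hp1 : p ≤ 1)
    (V : Submodule ℝ (EuclideanSpace ℝ ι))
    (hcard : ((9 : ℝ) ^ (1 / p)) ^ Module.finrank ℝ (EuclideanSpace ℝ ι ⧸ V)
      < Fintype.card ι) :
    ∃ i j, i ≠ j ∧ ∃ v ∈ V,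
      lpPow p (v - (EuclideanSpace.single i 1 - EuclideanSpace.single j 1)) < 1 / 4 := by
  by_contra! hfar
  have : IsClosed (V : Set (EuclideanSpace ℝ ι)) := V.closed_of_finiteDimensional
  let e : ι → EuclideanSpace ℝ ι := fun i => EuclideanSpace.single i 1
  let S := {x : EuclideanSpace ℝ ι | lpPow p x < 1 / 8}
  have hS : (9 : ℝ) ^ (1 / p) • S = {x | lpPow p x < 9 / 8} := by
    rw [lpPow.smul_setOf_lt (by positivity), ← Real.rpow_mul (by norm_num),
      one_div_mul_cancel hp0.ne', Real.rpow_one]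
    norm_num
  have hSball : S ⊆ Metric.closedBall 0 1 := fun x hx => by
    have := lpPow.norm_sq_le hp0 (by linarith) (hx.le.trans (by norm_num))
    rw [mem_closedBall_zero_iff]
    nlinarith [norm_nonneg x, hx.trans_le (show (1 : ℝ) / 8 ≤ 1 by norm_num)]
  have hUo : IsOpen (V.mkQ '' S) :=
    V.isOpenMap_mkQ _ (isOpen_lt (lpPow.continuous hp0) continuous_const)
  have hUne : (V.mkQ '' S).Nonempty := ⟨0, 0, by simp [S, lpPow.zero hp0.ne'], map_zero _⟩
  have hUb : Bornology.IsBounded (V.mkQ '' S) :=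
    ((isCompact_closedBall 0 1).image (LinearMap.continuous_of_finiteDimensional V.mkQ)
      ).isBounded.subset (Set.image_mono hSball)
  have hdisj : Pairwise (Disjoint on fun i => V.mkQ (e i) +ᵥ V.mkQ '' S) := by
    intro i j hij
    rw [onFun, Set.disjoint_left]
    rintro _ ⟨_, ⟨a, ha, rfl⟩, rfl⟩ ⟨_, ⟨b, hb, rfl⟩, hab⟩
    refine (hfar i j hij ((e i + a) - (e j + b)) ?_).not_gt ?_
    · exact (Submodule.Quotient.eq V).1 (by simpa [vadd_eq_add] using hab.symm)
    · calc lpPow p ((e i + a) - (e j + b) - (e i - e j)) = lpPow p (a - b) := by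
            congr 1; abel
        _ ≤ lpPow p a + lpPow p b := lpPow.sub_le hp0.le hp1 a b
        _ < 1 / 4 := by linarith [show lpPow p a < 1 / 8 from ha, show lpPow p b < 1 / 8 from hb]
  have hsub : ∀ i, V.mkQ (e i) +ᵥ V.mkQ '' S ⊆ (9 : ℝ) ^ (1 / p) • V.mkQ '' S := by
    rintro i _ ⟨_, ⟨a, ha, rfl⟩, rfl⟩
    rw [← image_smul_set, hS]
    refine ⟨e i + a, ?_, by simp⟩
    calc lpPow p (e i + a) ≤ lpPow p (e i) + lpPow p a := lpPow.add_le hp0.le hp1 _ _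
      _ < 9 / 8 := by
        rw [lpPow.single hp0.ne']; linarith [show lpPow p a < 1 / 8 from ha]
  exact hcard.not_ge
    (card_le_pow_finrank_of_pairwiseDisjoint_vadd hUo hUne hUb (by positivity) _ hdisj hsub)

lemma one_half_rpow_le (hp0 : 0 < p) (hp1 : p ≤ 1) :
    (1 / 2 : ℝ) ^ (2 / p - 1 / 2 : ℝ) ≤ (4 / 9 : ℝ) ^ (1 / p) * (√2 - 1 / 2) := by
  have hsplit : (1 / 2 : ℝ) ^ (2 / p - 1 / 2 : ℝ)
      = (4 / 9 : ℝ) ^ (1 / p) * ((9 / 16 : ℝ) ^ (1 / p) * √2) := by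
    rw [Real.rpow_sub (by norm_num), ← mul_assoc, ← Real.mul_rpow (by norm_num) (by norm_num),
      Real.sqrt_eq_rpow, div_eq_mul_inv, ← Real.inv_rpow (by norm_num), inv_div,
      show 2 / p = 2 * (1 / p) by ring, Real.rpow_mul (by norm_num)]
    norm_num
  have h916 : (9 / 16 : ℝ) ^ (1 / p) ≤ 9 / 16 := by
    simpa using Real.rpow_le_rpow_of_exponent_ge (x := (9 / 16 : ℝ)) (by norm_num) (by norm_num)
      (show (1 : ℝ) ≤ 1 / p by rw [le_div_iff₀ hp0]; linarith)
  have hsqrt : (9 / 16 : ℝ) * √2 ≤ √2 - 1 / 2 := by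
    nlinarith [Real.sq_sqrt (show (0 : ℝ) ≤ 2 by norm_num), Real.sqrt_nonneg 2]
  rw [hsplit]
  gcongr
  exact (mul_le_mul_of_nonneg_right h916 (Real.sqrt_nonneg 2)).trans hsqrt

lemma exists_mem_lpPow_le_one_le_norm (hp0 : 0 < p) (hp1 : p ≤ 1)
    (V : Submodule ℝ (EuclideanSpace ℝ ι))
    (hcard : ((9 : ℝ) ^ (1 / p)) ^ Module.finrank ℝ (EuclideanSpace ℝ ι ⧸ V)
      < Fintype.card ι) :
    ∃ z ∈ V, lpPow p z ≤ 1 ∧ (1 / 2 : ℝ) ^ (2 / p - 1 / 2 : ℝ) ≤ ‖z‖ := by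
  classical
  obtain ⟨i, j, hij, v, hv, hvw⟩ := exists_mem_lpPow_sub_single_sub_single_lt hp0 hp1 V hcard
  set w : EuclideanSpace ℝ ι := EuclideanSpace.single i 1 - EuclideanSpace.single j 1
  have hw : lpPow p w ≤ 2 := by
    simpa [lpPow.single hp0.ne', one_add_one_eq_two] using lpPow.sub_le hp0.le hp1
      (EuclideanSpace.single i (1 : ℝ)) (EuclideanSpace.single j 1)
  have hv_pow : lpPow p v ≤ 9 / 4 := by
    have := lpPow.add_le hp0.le hp1 (v - w) w
    rw [sub_add_cancel] at this
    linarith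
  have hvw_norm : ‖v - w‖ < 1 / 2 := by
    have := lpPow.norm_sq_le hp0 (by linarith) (hvw.le.trans (by norm_num))
    nlinarith [norm_nonneg (v - w)]
  have hv_norm : √2 - 1 / 2 ≤ ‖v‖ := by
    have := norm_sub_norm_le w v
    rw [EuclideanSpace.norm_single_sub_single hij, norm_sub_rev] at this
    linarith
  have ht : ((4 / 9 : ℝ) ^ (1 / p)) ^ p = 4 / 9 := by
    rw [← Real.rpow_mul (by norm_num), one_div_mul_cancel hp0.ne', Real.rpow_one]
  refine ⟨(4 / 9 : ℝ) ^ (1 / p) • v, V.smul_mem _ hv, ?_, ?_⟩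
  · rw [lpPow.smul, abs_of_pos (by positivity), ht]
    linarith
  · rw [norm_smul, Real.norm_of_nonneg (by positivity)]
    exact (one_half_rpow_le hp0 hp1).trans (by gcongr)

end Packing

lemma nine_rpow_pow_lt {m N : ℕ} (hm : 1 ≤ m) {p : ℝ} (hp0 : 0 < p) (hp1 : p ≤ 1)
    (hN : (m : ℝ) * Real.exp ((Real.log (3 ^ 8 * Real.exp 1) / (2 * p)) * m - 1) ≤ N) :
    ((9 : ℝ) ^ (1 / p)) ^ m < N := by
  have hm1 : (1 : ℝ) ≤ m := by exact_mod_cast hm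
  have hmp : 1 ≤ m / p := by rw [le_div_iff₀ hp0]; linarith
  have hlog3 : 1 < Real.log 3 := by
    rw [Real.lt_log_iff_exp_lt (by norm_num)]
    exact Real.exp_one_lt_d9.trans (by norm_num)
  have hexp : Real.log 9 * (m / p) < Real.log (3 ^ 8 * Real.exp 1) / (2 * p) * m - 1 := by
    have h9 : Real.log 9 = 2 * Real.log 3 := by
      rw [show (9 : ℝ) = 3 ^ 2 by norm_num, Real.log_pow]; norm_num
    rw [Real.log_mul (by positivity) (Real.exp_pos 1).ne', Real.log_pow, Real.log_exp, h9]
    push_cast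
    rw [show (8 * Real.log 3 + 1) / (2 * p) * m = (4 * Real.log 3 + 1 / 2) * (m / p) by
        field_simp; ring]
    nlinarith
  calc ((9 : ℝ) ^ (1 / p)) ^ m = Real.exp (Real.log 9 * (m / p)) := by
        rw [← Real.rpow_natCast, ← Real.rpow_mul (by norm_num),
          Real.rpow_def_of_pos (by norm_num)]
        ring_nf
    _ < Real.exp (Real.log (3 ^ 8 * Real.exp 1) / (2 * p) * m - 1) := Real.exp_lt_exp.2 hexp
    _ ≤ m * Real.exp (Real.log (3 ^ 8 * Real.exp 1) / (2 * p) * m - 1) :=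
        le_mul_of_one_le_left (Real.exp_pos _).le hm1
    _ ≤ N := hN

/-- let `0 < p < 1`, `m ≥ 1` and `N ≥ m e^{(log(3^8 e)/(2p)) m - 1}`.
Then for every adaptive sampling operator `Γ : ℓ²_N → ℝ^m` and every reconstruction
map `Δ : ℝ^m → ℝ^N`, the worst-case `ℓ²` recovery error over the `ℓ^p` quasi-norm
unit ball is at least `(1/2)^{2/p - 1/2}`; indeed there is an `x` in the ball whose
recovery error is at least that value (a bound that does not decay as `m → ∞`). -/
theorem statement6 {N m : ℕ} (hm : 1 ≤ m) (p : ℝ) (hp0 : 0 < p) (hp1 : p < 1)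
    (hN : (m : ℝ) * Real.exp ((Real.log (3 ^ 8 * Real.exp 1) / (2 * p)) * m - 1) ≤ N)
    (Γ : EuclideanSpace ℝ (Fin N) → (Fin m → ℝ)) (hΓ : IsAdaptive Γ)
    (Δ : (Fin m → ℝ) → EuclideanSpace ℝ (Fin N)) :
    ∃ x : EuclideanSpace ℝ (Fin N), (∑ i, |x i| ^ p) ^ (1 / p) ≤ 1 ∧
      (1 / 2 : ℝ) ^ (2 / p - 1 / 2 : ℝ) ≤ ‖x - Δ (Γ x)‖ := by
  obtain ⟨V, hV, hΓV⟩ := hΓ.exists_submodule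
  have hcard : ((9 : ℝ) ^ (1 / p)) ^ Module.finrank ℝ (EuclideanSpace ℝ (Fin N) ⧸ V)
      < Fintype.card (Fin N) := by
    rw [Fintype.card_fin]
    exact (pow_le_pow_right₀ (Real.one_le_rpow (by norm_num) (by positivity)) hV).trans_lt
      (nine_rpow_pow_lt hm hp0 hp1.le hN)
  obtain ⟨z, hzV, hz1, hz⟩ := exists_mem_lpPow_le_one_le_norm hp0 hp1.le V hcard
  have hball : ∀ x : EuclideanSpace ℝ (Fin N), lpPow p x ≤ 1 →
      (∑ i, |x i| ^ p) ^ (1 / p) ≤ 1 := fun x hx =>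
    Real.rpow_le_one (lpPow.nonneg x) hx (by positivity)
  rcases norm_le_norm_sub_or_norm_le_norm_neg_sub z (Δ 0) with h | h
  · exact ⟨z, hball z hz1, by rw [hΓV z hzV]; exact hz.trans h⟩
  · refine ⟨-z, hball (-z) (by rwa [lpPow.neg]), ?_⟩
    rw [hΓV (-z) (V.neg_mem hzV)]
    exact hz.trans h

end
end

section
/- Let N, m ∈ ℕ with m < N and let w = (w_i)_{i=1}^N be a vector of positive weights with nonincreasing rearrangement w_{(1)} ≥ w_{(2)} ≥ … ≥ w_{(N)}. Then the Kolmogorov m-width of the weighted ℓ^2 ball B^2_N(w) in ℓ^1_N satisfies d_m(B^2_N(w), ℓ^1_N) = min_{T ⊆ [N], |T| = N−m} ( ∑_{i∈T} w_i^2 )^{1/2} = ( ∑_{j=m+1}^{N} w_{(j)}^2 )^{1/2}. -/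
open Finset
open scoped ENNReal

noncomputable section

/-- The weighted `ℓ^p` (quasi-)norm on `ℝ^N` with positive weights `w` and exponent
`p ∈ (0,∞]`: `‖x‖_{p,w} = (∑ i, (|x i| / w i)^p)^(1/p)` for `p < ∞`, and
`sup_i |x i| / w i` for `p = ∞`. -/
def wnorm {N : ℕ} (p : ℝ≥0∞) (w : Fin N → ℝ) (x : Fin N → ℝ) : ℝ :=
  if p = ⊤ then ⨆ i, |x i| / w i
  else (∑ i, (|x i| / w i) ^ p.toReal) ^ (1 / p.toReal)

/-- The weighted `ℓ^p` unit ball `B^p_N(w)` in `ℝ^N`. -/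
def wball {N : ℕ} (p : ℝ≥0∞) (w : Fin N → ℝ) : Set (Fin N → ℝ) :=
  {x | wnorm p w x ≤ 1}

/-- The Kolmogorov `m`-width of a subset `K` of `ℝ^N` equipped with the norm `nrm`. -/
def kolWidth {N : ℕ} (m : ℕ) (K : Set (Fin N → ℝ)) (nrm : (Fin N → ℝ) → ℝ) : ℝ :=
  sInf { r | ∃ X : Submodule ℝ (Fin N → ℝ), Module.finrank ℝ X ≤ m ∧
    r = ⨆ x : K, ⨅ z : X, nrm ((x : Fin N → ℝ) - (z : Fin N → ℝ)) }

/-!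
For the upper bound take `X` to be the vectors vanishing on a set `T` of `N - m` indices
carrying the smallest weights: the error of `x ∈ B²_N(w)` is `∑_{i ∈ T} |x i|`, which
Cauchy–Schwarz bounds by `(∑_{i ∈ T} w i ²)^{1/2}`.

For the lower bound let `dim X ≤ m`. Its annihilator has dimension `≥ N - m`, and any subspace `V`
contains a `y` in the cube `‖y‖_∞ ≤ 1` with at least `dim V` coordinates equal to `±1`: if fewer are
saturated, some nonzero `z ∈ V` vanishes on them, and moving along `z` saturates one more. The
functional `y ⬝ᵥ ·` vanishes on `X` and is dominated by `‖·‖₁`, so the distance from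
`x₀ = w² y / ‖w y‖₂ ∈ B²_N(w)` to `X` is at least `y ⬝ᵥ x₀ = ‖w y‖₂ ≥ (∑_{|y i| = 1} w i ²)^{1/2}`.
-/

open Module

section SignVector

variable {ι : Type*} [Fintype ι]

lemma Submodule.exists_mem_ne_zero_forall_eq_zero_of_card_lt_finrank {K : Type*} [Field K]
    (V : Submodule K (ι → K)) (S : Finset ι) (hS : #S < finrank K V) :
    ∃ z ∈ V, z ≠ 0 ∧ ∀ i ∈ S, z i = 0 := by
  let restrict := LinearMap.funLeft K K ((↑) : S → ι) ∘ₗ V.subtype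
  have hker : LinearMap.ker restrict ≠ ⊥ := LinearMap.ker_ne_bot_of_finrank_lt <| by
    rwa [Module.finrank_fintype_fun_eq_card, Fintype.card_coe]
  obtain ⟨z, hz, hz0⟩ := (Submodule.ne_bot_iff _).1 hker
  exact ⟨z, z.2, by simpa using hz0, fun i hi => congrFun (LinearMap.mem_ker.1 hz) ⟨i, hi⟩⟩

lemma abs_add_mul_le_one_of_le {a b s t : ℝ} (ha : |a| ≤ 1) (hs : |a + s * b| ≤ 1)
    (ht : 0 ≤ t) (hts : t ≤ s) : |a + t * b| ≤ 1 := by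
  rw [abs_le] at *
  rcases le_total 0 b with hb | hb
  · constructor <;> nlinarith [mul_le_mul_of_nonneg_right hts hb, mul_nonneg ht hb]
  · constructor <;>
      nlinarith [mul_le_mul_of_nonpos_right hts hb, mul_nonpos_of_nonneg_of_nonpos ht hb]

lemma exists_abs_add_mul_le_one_and_ssubset {y z : ι → ℝ} (hy : ∀ i, |y i| ≤ 1) (hz : z ≠ 0)
    (hzy : ∀ i, |y i| = 1 → z i = 0) :
    ∃ t : ℝ, (∀ i, |y i + t * z i| ≤ 1) ∧
      ({i | |y i| = 1} : Finset ι) ⊂ ({i | |y i + t * z i| = 1} : Finset ι) := by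
  -- `t i` is the step at which coordinate `i` reaches `±1`: `y i + t i * z i = |z i| / z i`.
  set t : ι → ℝ := fun i => (|z i| - y i * z i) / z i ^ 2
  have hsat : ∀ i, z i ≠ 0 → |y i + t i * z i| = 1 := by
    intro i hi
    have : y i + t i * z i = |z i| / z i := by simp only [t]; field_simp; ring
    rw [this, abs_div, abs_abs, div_self (abs_ne_zero.2 hi)]
  have ht : ∀ i, 0 ≤ t i := fun i => div_nonneg (by
    nlinarith [le_abs_self (y i * z i), abs_mul (y i) (z i), hy i, abs_nonneg (z i)])
    (sq_nonneg _)
  obtain ⟨i₀, hi₀, hmin⟩ := exists_min_image ({i | z i ≠ 0} : Finset ι) t <| by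
    obtain ⟨i, hi⟩ := Function.ne_iff.1 hz
    exact ⟨i, by simpa using hi⟩
  have hzi₀ : z i₀ ≠ 0 := by simpa using hi₀
  refine ⟨t i₀, fun i => ?_, ?_⟩
  · by_cases hi : z i = 0
    · simpa [hi] using hy i
    · exact abs_add_mul_le_one_of_le (hy i) (hsat i hi).le (ht i₀) (hmin i (by simpa using hi))
  · rw [Finset.ssubset_iff_of_subset]
    · exact ⟨i₀, by simpa using hsat i₀ hzi₀, by simpa using mt (hzy i₀) hzi₀⟩
    · intro i hi
      simp only [mem_filter, mem_univ, true_and] at hi ⊢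
      simp [hzy i hi, hi]

theorem Submodule.exists_mem_abs_le_one_finrank_le_card (V : Submodule ℝ (ι → ℝ)) :
    ∃ y ∈ V, (∀ i, |y i| ≤ 1) ∧ finrank ℝ V ≤ #{i | |y i| = 1} := by
  let counts : Set ℕ := {k | ∃ y ∈ V, (∀ i, |y i| ≤ 1) ∧ #{i | |y i| = 1} = k}
  have hbdd : BddAbove counts := ⟨Fintype.card ι, by rintro _ ⟨y, -, -, rfl⟩; exact card_le_univ _⟩
  obtain ⟨y, hyV, hy, hk⟩ : sSup counts ∈ counts :=
    Nat.sSup_mem ⟨0, 0, V.zero_mem, by simp, by simp⟩ hbdd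
  refine ⟨y, hyV, hy, not_lt.1 fun hlt => ?_⟩
  obtain ⟨z, hzV, hz, hzS⟩ := V.exists_mem_ne_zero_forall_eq_zero_of_card_lt_finrank _ hlt
  obtain ⟨t, hyt, hss⟩ :=
    exists_abs_add_mul_le_one_and_ssubset hy hz fun i hi => hzS i (by simpa using hi)
  have hle : #{i | |y i + t * z i| = 1} ≤ sSup counts :=
    le_csSup hbdd ⟨y + t • z, V.add_mem hyV (V.smul_mem t hzV), hyt, rfl⟩
  have hlt := card_lt_card hss
  omega

theorem Submodule.exists_dotProduct_eq_zero_abs_le_one (X : Submodule ℝ (ι → ℝ)) :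
    ∃ y : ι → ℝ, (∀ x ∈ X, y ⬝ᵥ x = 0) ∧ (∀ i, |y i| ≤ 1) ∧
      Fintype.card ι - finrank ℝ X ≤ #{i | |y i| = 1} := by
  let annihilate := X.subtype.dualMap ∘ₗ dotProductBilin ℝ ℝ
  obtain ⟨y, hy, hy1, hcard⟩ := (LinearMap.ker annihilate).exists_mem_abs_le_one_finrank_le_card
  refine ⟨y, fun x hx => LinearMap.congr_fun (LinearMap.mem_ker.1 hy) ⟨x, hx⟩, hy1, ?_⟩
  have hrank := annihilate.finrank_range_add_finrank_ker
  have hrange := (LinearMap.range annihilate).finrank_le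
  rw [Subspace.dual_finrank_eq] at hrange
  rw [Module.finrank_fintype_fun_eq_card] at hrank
  omega

lemma dotProduct_le_sum_abs {y : ι → ℝ} (hy : ∀ i, |y i| ≤ 1) (v : ι → ℝ) :
    y ⬝ᵥ v ≤ ∑ i, |v i| :=
  sum_le_sum fun i _ => (le_abs_self _).trans <| by
    rw [abs_mul]
    exact mul_le_of_le_one_left (abs_nonneg _) (hy i)

end SignVector

lemma Finset.sum_le_sum_of_card_le_of_forall_le {ι M : Type*} [DecidableEq ι]
    [AddCommMonoid M] [LinearOrder M] [IsOrderedCancelAddMonoid M] {A S : Finset ι} {g : ι → M}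
    (hcard : #A ≤ #S) (hg : ∀ i, 0 ≤ g i) (hle : ∀ a ∈ A, ∀ s ∉ A, g a ≤ g s) :
    ∑ i ∈ A, g i ≤ ∑ i ∈ S, g i := by
  suffices h : ∑ i ∈ A \ S, g i ≤ ∑ i ∈ S \ A, g i by
    rw [← sum_inter_add_sum_sdiff A S, ← sum_inter_add_sum_sdiff S A, inter_comm]
    gcongr
  rcases (A \ S).eq_empty_or_nonempty with hAS | hAS
  · rw [hAS, sum_empty]
    exact sum_nonneg fun i _ => hg i
  obtain ⟨a, ha, hmax⟩ := exists_max_image (A \ S) g hAS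
  calc ∑ i ∈ A \ S, g i ≤ #(A \ S) • g a := sum_le_card_nsmul _ _ _ hmax
    _ ≤ #(S \ A) • g a := nsmul_le_nsmul_left (hg a) (card_sdiff_le_card_sdiff_iff.2 hcard)
    _ ≤ ∑ i ∈ S \ A, g i := card_nsmul_le_sum _ _ _ fun s hs =>
        hle a (mem_sdiff.1 ha).1 s (mem_sdiff.1 hs).2

lemma Fin.card_filter_le_val (N m : ℕ) : #{j : Fin N | m ≤ (j : ℕ)} = N - m := by
  have h := card_filter_add_card_filter_not (s := univ) fun j : Fin N => (j : ℕ) < m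
  simp only [not_lt, card_univ, Fintype.card_fin, Fin.card_filter_val_lt] at h
  omega

lemma sum_filter_le_val_le_sum_of_antitone {M : Type*} [AddCommMonoid M] [LinearOrder M]
    [IsOrderedCancelAddMonoid M] {N m : ℕ} {g : Fin N → M} (hg : ∀ i, 0 ≤ g i)
    {σ : Equiv.Perm (Fin N)} (hσ : Antitone (g ∘ σ)) {T : Finset (Fin N)} (hT : N - m ≤ #T) :
    ∑ j ∈ {j : Fin N | m ≤ (j : ℕ)}, g (σ j) ≤ ∑ i ∈ T, g i := by
  refine (sum_map _ σ.toEmbedding g).symm.trans_le <|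
    sum_le_sum_of_card_le_of_forall_le (by rwa [card_map, Fin.card_filter_le_val]) hg ?_
  intro a ha s hs
  simp only [mem_map_equiv, mem_filter, mem_univ, true_and, not_le] at ha hs
  simpa using hσ (show σ.symm s ≤ σ.symm a by rw [Fin.le_def]; omega)

def vanishingOn {ι K : Type*} [Field K] (T : Finset ι) : Submodule K (ι → K) :=
  LinearMap.ker (LinearMap.funLeft K K (Subtype.val : T → ι))

lemma finrank_vanishingOn {ι K : Type*} [Fintype ι] [Field K] (T : Finset ι) :
    finrank K (vanishingOn (K := K) T) = Fintype.card ι - #T := by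
  have h := (LinearMap.funLeft K K (Subtype.val : T → ι)).finrank_range_add_finrank_ker
  rw [LinearMap.range_eq_top.2 (LinearMap.funLeft_surjective_of_injective _ _ _
    Subtype.val_injective), finrank_top, Module.finrank_fintype_fun_eq_card,
    Module.finrank_fintype_fun_eq_card, Fintype.card_coe] at h
  rw [vanishingOn]
  omega

section Widths

variable {N : ℕ}

def deviation (K : Set (Fin N → ℝ)) (X : Submodule ℝ (Fin N → ℝ))
    (nrm : (Fin N → ℝ) → ℝ) : ℝ :=
  ⨆ x : K, ⨅ z : X, nrm ((x : Fin N → ℝ) - (z : Fin N → ℝ))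

lemma kolWidth_eq_of_forall_le_of_exists {m : ℕ} {K : Set (Fin N → ℝ)}
    {nrm : (Fin N → ℝ) → ℝ} {c : ℝ}
    (hle : ∀ X : Submodule ℝ (Fin N → ℝ), finrank ℝ X ≤ m → c ≤ deviation K X nrm)
    (hex : ∃ X : Submodule ℝ (Fin N → ℝ), finrank ℝ X ≤ m ∧ deviation K X nrm ≤ c) :
    kolWidth m K nrm = c := by
  obtain ⟨X, hX, hXc⟩ := hex
  refine IsLeast.csInf_eq ⟨⟨X, hX, (le_antisymm hXc (hle X hX)).symm⟩, ?_⟩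
  rintro _ ⟨Y, hY, rfl⟩
  exact hle Y hY

lemma wnorm_one_one : wnorm 1 (fun _ => 1) = fun x : Fin N → ℝ => ∑ i, |x i| := by
  ext x
  simp [wnorm]

lemma mem_wball_two_iff {w x : Fin N → ℝ} : x ∈ wball 2 w ↔ ∑ i, (x i / w i) ^ 2 ≤ 1 := by
  simp only [wball, wnorm, Set.mem_ofPred_eq, ENNReal.ofNat_ne_top, if_false,
    ENNReal.toReal_ofNat, ← Real.sqrt_eq_rpow, Real.sqrt_le_one, Real.rpow_two, div_pow, sq_abs]

lemma abs_le_abs_of_mem_wball_two {w x : Fin N → ℝ} (hx : x ∈ wball 2 w) {i : Fin N}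
    (hwi : w i ≠ 0) : |x i| ≤ |w i| := by
  have hi : (x i / w i) ^ 2 ≤ 1 :=
    (single_le_sum (fun j _ => sq_nonneg (x j / w j)) (mem_univ i)).trans
      (mem_wball_two_iff.1 hx)
  rwa [sq_le_one_iff_abs_le_one, abs_div, div_le_one (abs_pos.2 hwi)] at hi

lemma bddBelow_range_sum_abs_sub (X : Submodule ℝ (Fin N → ℝ)) (x : Fin N → ℝ) :
    BddBelow (Set.range fun z : X => ∑ i, |(x - z) i|) :=
  ⟨0, Set.forall_mem_range.2 fun _ => by positivity⟩

lemma bddAbove_range_iInf_sum_abs_sub {w : Fin N → ℝ} (hw : ∀ i, w i ≠ 0)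
    (X : Submodule ℝ (Fin N → ℝ)) :
    BddAbove (Set.range fun x : wball 2 w => ⨅ z : X, ∑ i, |((x : Fin N → ℝ) - z) i|) := by
  refine ⟨∑ i, |w i|, Set.forall_mem_range.2 fun x => ?_⟩
  refine (ciInf_le (bddBelow_range_sum_abs_sub X x) 0).trans ?_
  simpa using sum_le_sum fun i _ => abs_le_abs_of_mem_wball_two x.2 (hw i)

lemma deviation_vanishingOn_le {w : Fin N → ℝ} (hw : ∀ i, w i ≠ 0) (T : Finset (Fin N)) :
    deviation (wball 2 w) (vanishingOn T) (fun v => ∑ i, |v i|) ≤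
      √(∑ i ∈ T, w i ^ 2) := by
  have : Nonempty (wball 2 w) := ⟨0, by simp [mem_wball_two_iff]⟩
  refine ciSup_le fun ⟨x, hx⟩ => ?_
  let z : Fin N → ℝ := fun i => if i ∈ T then 0 else x i
  have hz : z ∈ vanishingOn T := by
    ext ⟨i, hi⟩
    simp [z, LinearMap.funLeft, show i ∈ T from hi]
  refine (ciInf_le (bddBelow_range_sum_abs_sub _ _) ⟨z, hz⟩).trans ?_
  calc ∑ i, |(x - z) i| = ∑ i ∈ T, |x i| := by
        simp only [Pi.sub_apply, z, apply_ite, sub_zero, sub_self, abs_zero]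
        rw [sum_ite_mem, univ_inter]
    _ = ∑ i ∈ T, |w i| * |x i / w i| := sum_congr rfl fun i _ => by
        rw [abs_div, mul_div_cancel₀ _ (abs_ne_zero.2 (hw i))]
    _ ≤ √(∑ i ∈ T, |w i| ^ 2) * √(∑ i ∈ T, |x i / w i| ^ 2) :=
        Real.sum_mul_le_sqrt_mul_sqrt _ _ _
    _ ≤ √(∑ i ∈ T, w i ^ 2) * 1 := by
        simp only [sq_abs]
        gcongr
        exact Real.sqrt_le_one.2 <| (sum_le_univ_sum_of_nonneg fun i => sq_nonneg _).trans
          (mem_wball_two_iff.1 hx)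
    _ = √(∑ i ∈ T, w i ^ 2) := mul_one _

lemma sqrt_sum_sq_mul_sq_le_deviation {w : Fin N → ℝ} (hw : ∀ i, w i ≠ 0)
    {X : Submodule ℝ (Fin N → ℝ)} {y : Fin N → ℝ} (hyX : ∀ x ∈ X, y ⬝ᵥ x = 0)
    (hy : ∀ i, |y i| ≤ 1) :
    √(∑ i, w i ^ 2 * y i ^ 2) ≤ deviation (wball 2 w) X (fun v => ∑ i, |v i|) := by
  set Q := ∑ i, w i ^ 2 * y i ^ 2
  -- If `Q = 0` this division by zero gives `x₀ = 0`, and both estimates below still hold.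
  let x₀ : Fin N → ℝ := fun i => w i ^ 2 * y i / √Q
  have hx₀ : x₀ ∈ wball 2 w := by
    rw [mem_wball_two_iff]
    calc ∑ i, (x₀ i / w i) ^ 2 = Q / √Q ^ 2 := by
          rw [sum_div]
          refine sum_congr rfl fun i _ => ?_
          simp only [x₀]
          field_simp [hw i]
      _ ≤ 1 := by
          rw [Real.sq_sqrt (by positivity)]
          exact div_self_le_one Q
  have hyx₀ : y ⬝ᵥ x₀ = √Q := by
    rw [← Real.div_sqrt, dotProduct, sum_div]
    exact sum_congr rfl fun i _ => by ring
  refine le_ciSup_of_le (bddAbove_range_iInf_sum_abs_sub hw X) ⟨x₀, hx₀⟩ (le_ciInf fun z => ?_)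
  calc √Q = y ⬝ᵥ (x₀ - z) := by rw [dotProduct_sub, hyx₀, hyX z z.2, sub_zero]
    _ ≤ ∑ i, |(x₀ - z) i| := dotProduct_le_sum_abs hy _

lemma exists_card_le_sqrt_sum_le_deviation {w : Fin N → ℝ} (hw : ∀ i, w i ≠ 0)
    (X : Submodule ℝ (Fin N → ℝ)) :
    ∃ T : Finset (Fin N), N - finrank ℝ X ≤ #T ∧
      √(∑ i ∈ T, w i ^ 2) ≤ deviation (wball 2 w) X (fun v => ∑ i, |v i|) := by
  obtain ⟨y, hyX, hy, hcard⟩ := X.exists_dotProduct_eq_zero_abs_le_one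
  refine ⟨({i | |y i| = 1} : Finset (Fin N)), by simpa using hcard,
    (Real.sqrt_le_sqrt ?_).trans (sqrt_sum_sq_mul_sq_le_deviation hw hyX hy)⟩
  calc ∑ i ∈ {i | |y i| = 1}, w i ^ 2 = ∑ i ∈ {i | |y i| = 1}, w i ^ 2 * y i ^ 2 :=
        sum_congr rfl fun i hi => by rw [← sq_abs (y i), (mem_filter.1 hi).2]; ring
    _ ≤ ∑ i, w i ^ 2 * y i ^ 2 := sum_le_univ_sum_of_nonneg fun i => by positivity

end Widths

theorem statement7_general {N m : ℕ} (w : Fin N → ℝ) (hw : ∀ i, 0 < w i)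
    (σ : Equiv.Perm (Fin N)) (hσ : ∀ i j : Fin N, i ≤ j → w (σ j) ≤ w (σ i)) :
    kolWidth m (wball 2 w) (wnorm 1 (fun _ => 1)) =
        sInf { r | ∃ T : Finset (Fin N), T.card = N - m ∧
          r = (∑ i ∈ T, w i ^ 2) ^ (1/2 : ℝ) } ∧
    kolWidth m (wball 2 w) (wnorm 1 (fun _ => 1)) =
        (∑ j ∈ Finset.univ.filter (fun j : Fin N => m ≤ (j : ℕ)), w (σ j) ^ 2) ^ (1/2 : ℝ) := by
  have hw₀ : ∀ i, w i ≠ 0 := fun i => (hw i).ne'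
  set A : Finset (Fin N) := ({j : Fin N | m ≤ (j : ℕ)} : Finset (Fin N)).map σ.toEmbedding
  have hA : #A = N - m := by rw [card_map, Fin.card_filter_le_val]
  have htail : ∑ j ∈ {j : Fin N | m ≤ (j : ℕ)}, w (σ j) ^ 2 = ∑ i ∈ A, w i ^ 2 :=
    (sum_map _ σ.toEmbedding fun i => w i ^ 2).symm
  have hmin : ∀ T : Finset (Fin N), N - m ≤ #T → ∑ i ∈ A, w i ^ 2 ≤ ∑ i ∈ T, w i ^ 2 :=
    fun T hT => htail ▸ sum_filter_le_val_le_sum_of_antitone (fun i => sq_nonneg (w i))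
      (fun i j hij => pow_le_pow_left₀ (hw _).le (hσ i j hij) 2) hT
  have hwidth : kolWidth m (wball 2 w) (wnorm 1 (fun _ => 1)) = √(∑ i ∈ A, w i ^ 2) := by
    rw [wnorm_one_one]
    refine kolWidth_eq_of_forall_le_of_exists (fun X hX => ?_)
      ⟨vanishingOn A, by rw [finrank_vanishingOn, Fintype.card_fin, hA]; omega,
        deviation_vanishingOn_le hw₀ A⟩
    obtain ⟨T, hT, hTX⟩ := exists_card_le_sqrt_sum_le_deviation hw₀ X
    exact (Real.sqrt_le_sqrt (hmin T (by omega))).trans hTX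
  simp only [← Real.sqrt_eq_rpow, htail, hwidth, and_true]
  symm
  refine IsLeast.csInf_eq ⟨⟨A, hA, rfl⟩, ?_⟩
  rintro _ ⟨T, hT, rfl⟩
  exact Real.sqrt_le_sqrt (hmin T hT.ge)

/-- if `w` is a vector of positive weights with nonincreasing
rearrangement `w ∘ σ` and `m < N`, then
`d_m(B²_N(w), ℓ¹_N) = min_{|T| = N-m} (∑_{i ∈ T} w_i²)^{1/2} = (∑_{j=m+1}^N w_{(j)}²)^{1/2}`. -/
theorem statement7 {N m : ℕ} (hm : m < N) (w : Fin N → ℝ) (hw : ∀ i, 0 < w i)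
    (σ : Equiv.Perm (Fin N)) (hσ : ∀ i j : Fin N, i ≤ j → w (σ j) ≤ w (σ i)) :
    kolWidth m (wball 2 w) (wnorm 1 (fun _ => 1)) =
        sInf { r | ∃ T : Finset (Fin N), T.card = N - m ∧
          r = (∑ i ∈ T, w i ^ 2) ^ (1/2 : ℝ) } ∧
    kolWidth m (wball 2 w) (wnorm 1 (fun _ => 1)) =
        (∑ j ∈ Finset.univ.filter (fun j : Fin N => m ≤ (j : ℕ)), w (σ j) ^ 2) ^ (1/2 : ℝ) :=
  statement7_general w hw σ hσ

end
end

section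
/- Let N, m ∈ ℕ with m < N and let w = (w_i)_{i=1}^N be a vector of positive weights with nonincreasing rearrangement w_{(1)} ≥ w_{(2)} ≥ … ≥ w_{(N)}. Then the Gelfand m-width of the weighted ℓ^∞ ball B^∞_N(w) in the Euclidean space ℓ^2_N satisfies d^m(B^∞_N(w), ℓ^2_N) = ( ∑_{j=m+1}^{N} w_{(j)}^2 )^{1/2}. -/
/-!
Reading off the `m` coordinates with the largest weights gives a map `A` whose kernel meets the
box only in vectors of norm at most `(∑_{j>m} w_{(j)}²)^{1/2}`. Conversely, for any `A`, let `x`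
maximise `∑ x_i²` on the compact set `B^∞_N(w) ∩ ker A`. If fewer than `N - m` coordinates of `x`
were saturated (`|x_i| = w_i`), some `v ≠ 0` in `ker A` would vanish on all of them, so `x ± t v`
would stay in the set for small `t > 0`; as `‖x + t v‖² + ‖x - t v‖² = 2‖x‖² + 2t²‖v‖²`, one of
them would be longer than `x`. Hence `‖x‖²` dominates a sum of at least `N - m` of the `w_i²`,
which is at least the sum of the `N - m` smallest ones.
-/

open Finset
open scoped ENNReal

noncomputable section

/-- The Gelfand `m`-width of a subset `K` of `ℝ^N` equipped with the norm `nrm`: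
the infimum over linear maps `A : ℝ^N → ℝ^m` of `sup { nrm x : x ∈ K ∩ ker A }`
(equivalently, the infimum over subspaces of codimension at most `m`). -/
def gelWidth {N : ℕ} (m : ℕ) (K : Set (Fin N → ℝ)) (nrm : (Fin N → ℝ) → ℝ) : ℝ :=
  sInf { r | ∃ A : (Fin N → ℝ) →ₗ[ℝ] (Fin m → ℝ),
    r = ⨆ x : (K ∩ (LinearMap.ker A : Set (Fin N → ℝ)) : Set (Fin N → ℝ)),
          nrm (x : Fin N → ℝ) }

open Filter Topology

lemma wnorm_two_one {N : ℕ} (x : Fin N → ℝ) :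
    wnorm 2 (fun _ => 1) x = √(∑ i, x i ^ 2) := by
  rw [wnorm, if_neg ENNReal.ofNat_ne_top, Real.sqrt_eq_rpow]
  norm_num

lemma mem_wball_top_iff {N : ℕ} {w : Fin N → ℝ} (hw : ∀ i, 0 < w i) {x : Fin N → ℝ} :
    x ∈ wball ⊤ w ↔ ∀ i, |x i| ≤ w i := by
  simp only [wball, wnorm, if_pos, Set.mem_ofPred_eq]
  exact ⟨fun h i => (div_le_one (hw i)).1 ((le_ciSup (Set.finite_range _).bddAbove i).trans h),
    fun h => Real.iSup_le (fun i => (div_le_one (hw i)).2 (h i)) zero_le_one⟩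

lemma isCompact_wball_top {N : ℕ} {w : Fin N → ℝ} (hw : ∀ i, 0 < w i) :
    IsCompact (wball ⊤ w) := by
  have : wball ⊤ w = Set.Icc (-w) w := by
    ext x
    simp [mem_wball_top_iff hw, abs_le, Pi.le_def, forall_and]
  exact this ▸ isCompact_Icc

lemma exists_ne_zero_mem_ker_forall_eq_zero {ι K : Type*} [Fintype ι] [Field K] {m : ℕ}
    (A : (ι → K) →ₗ[K] (Fin m → K)) (S : Finset ι) (h : m + #S < Fintype.card ι) :
    ∃ v ≠ 0, A v = 0 ∧ ∀ i ∈ S, v i = 0 := by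
  let Φ := A.prod (LinearMap.funLeft K K ((↑) : S → ι))
  obtain ⟨v, hv, hv0⟩ := (Submodule.ne_bot_iff _).1
    (LinearMap.ker_ne_bot_of_finrank_lt (f := Φ) (by simpa using h))
  simp only [LinearMap.mem_ker, Φ, LinearMap.prod_apply, Function.prod_apply,
    Prod.mk_eq_zero] at hv
  exact ⟨v, hv0, hv.1, fun i hi => congrFun hv.2 ⟨i, hi⟩⟩

lemma eventually_forall_abs_add_mul_le {ι : Type*} [Finite ι] {x v w : ι → ℝ}
    (hx : ∀ i, |x i| ≤ w i) (hv : ∀ i, |x i| = w i → v i = 0) :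
    ∀ᶠ t in 𝓝 (0 : ℝ), ∀ i, |x i + t * v i| ≤ w i := by
  refine eventually_all.2 fun i => ?_
  by_cases hvi : v i = 0
  · simp [hvi, hx i]
  · have hlt : |x i + 0 * v i| < w i := by simpa using (hx i).lt_of_ne (mt (hv i) hvi)
    exact ((by fun_prop : Continuous fun t : ℝ => |x i + t * v i|).continuousAt.eventually_lt
      continuousAt_const hlt).mono fun _ => le_of_lt

lemma eq_zero_of_isMaxOn_sum_sq {ι : Type*} [Fintype ι] {K : Set (ι → ℝ)} {x v : ι → ℝ} {t : ℝ}
    (hmax : IsMaxOn (fun y => ∑ i, y i ^ 2) K x) (ht : t ≠ 0)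
    (hplus : x + t • v ∈ K) (hminus : x - t • v ∈ K) : v = 0 := by
  have hpar : ∑ i, (x + t • v) i ^ 2 + ∑ i, (x - t • v) i ^ 2
      = 2 * ∑ i, x i ^ 2 + 2 * t ^ 2 * ∑ i, v i ^ 2 := by
    simp only [Pi.add_apply, Pi.sub_apply, Pi.smul_apply, smul_eq_mul, ← sum_add_distrib, mul_sum]
    exact sum_congr rfl fun i _ => by ring
  have hv : ∑ i, v i ^ 2 ≤ 0 := by
    have h₁ : ∑ i, (x + t • v) i ^ 2 ≤ ∑ i, x i ^ 2 := hmax hplus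
    have h₂ : ∑ i, (x - t • v) i ^ 2 ≤ ∑ i, x i ^ 2 := hmax hminus
    nlinarith [sq_pos_of_ne_zero ht]
  funext i
  exact pow_eq_zero_iff two_ne_zero |>.1 <|
    (sum_eq_zero_iff_of_nonneg fun i _ => sq_nonneg (v i)).1
      (hv.antisymm (sum_nonneg fun i _ => sq_nonneg _)) i (mem_univ i)

lemma exists_mem_wball_ker_card_saturated {N m : ℕ} {w : Fin N → ℝ} (hw : ∀ i, 0 < w i)
    (A : (Fin N → ℝ) →ₗ[ℝ] (Fin m → ℝ)) :
    ∃ x ∈ wball ⊤ w ∩ LinearMap.ker A, N ≤ m + #{i | |x i| = w i} := by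
  have hK : IsCompact (wball ⊤ w ∩ LinearMap.ker A) :=
    (isCompact_wball_top hw).inter_right (LinearMap.ker A).closed_of_finiteDimensional
  have h0 : (0 : Fin N → ℝ) ∈ wball ⊤ w ∩ LinearMap.ker A :=
    ⟨(mem_wball_top_iff hw).2 fun i => by simpa using (hw i).le, zero_mem _⟩
  obtain ⟨x, hxK, hmax⟩ := hK.exists_isMaxOn ⟨0, h0⟩
    (by fun_prop : Continuous fun y : Fin N → ℝ => ∑ i, y i ^ 2).continuousOn
  refine ⟨x, hxK, not_lt.1 fun hlt => ?_⟩
  obtain ⟨v, hv0, hAv, hvS⟩ := exists_ne_zero_mem_ker_forall_eq_zero A _ (by simpa using hlt)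
  have hbox := eventually_forall_abs_add_mul_le ((mem_wball_top_iff hw).1 hxK.1)
    (v := v) fun i hi => hvS i (by simpa using hi)
  have hbox' := (continuous_neg.tendsto' (0 : ℝ) 0 neg_zero).eventually hbox
  obtain ⟨t, ⟨hplus, hminus⟩, ht⟩ := (((hbox.and hbox').filter_mono nhdsWithin_le_nhds).and
    (self_mem_nhdsWithin (s := Set.Ioi 0))).exists
  have hv : v ∈ LinearMap.ker A := hAv
  refine hv0 (eq_zero_of_isMaxOn_sum_sq hmax (ne_of_gt ht) ⟨?_, ?_⟩ ⟨?_, ?_⟩)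
  · exact (mem_wball_top_iff hw).2 (by simpa using hplus)
  · exact add_mem hxK.2 (Submodule.smul_mem _ t hv)
  · exact (mem_wball_top_iff hw).2 (by simpa [sub_eq_add_neg] using hminus)
  · exact sub_mem hxK.2 (Submodule.smul_mem _ t hv)

lemma sum_le_sum_of_card_le {ι : Type*} [DecidableEq ι] {s t : Finset ι} {g : ι → ℝ} {c : ℝ}
    (hcard : #s ≤ #t) (hc : 0 ≤ c) (hs : ∀ i ∈ s \ t, g i ≤ c) (ht : ∀ i ∈ t \ s, c ≤ g i) :
    ∑ i ∈ s, g i ≤ ∑ i ∈ t, g i :=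
  calc ∑ i ∈ s, g i = ∑ i ∈ s ∩ t, g i + ∑ i ∈ s \ t, g i := (sum_inter_add_sum_sdiff s t g).symm
    _ ≤ ∑ i ∈ t ∩ s, g i + #(t \ s) • c := by
        rw [inter_comm]
        gcongr
        exact (sum_le_card_nsmul _ _ _ hs).trans
          (nsmul_le_nsmul_left hc (card_sdiff_le_card_sdiff_iff.2 hcard))
    _ ≤ ∑ i ∈ t ∩ s, g i + ∑ i ∈ t \ s, g i := by grw [card_nsmul_le_sum _ _ _ ht]
    _ = ∑ i ∈ t, g i := sum_inter_add_sum_sdiff t s g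

lemma sum_tail_le_sum_of_card_le {N m : ℕ} (hm : m < N) {g : Fin N → ℝ} (hg : Antitone g)
    (hg0 : ∀ i, 0 ≤ g i) {T : Finset (Fin N)} (hT : N ≤ m + #T) :
    ∑ j ∈ univ.filter (fun j : Fin N => m ≤ (j : ℕ)), g j ≤ ∑ j ∈ T, g j := by
  let k : Fin N := ⟨m, hm⟩
  have htail : univ.filter (fun j : Fin N => m ≤ (j : ℕ)) = Ici k := by
    ext
    simp [k, Fin.le_def]
  rw [htail]
  refine sum_le_sum_of_card_le (c := g k) ?_ (hg0 k) (fun i hi => hg ?_) (fun i hi => hg ?_)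
  · rw [Fin.card_Ici, Fin.val_mk]
    omega
  · exact mem_Ici.1 (mem_sdiff.1 hi).1
  · exact (not_le.1 (mt mem_Ici.2 (mem_sdiff.1 hi).2)).le

lemma exists_mem_wball_ker_sum_tail_le {N m : ℕ} (hm : m < N) {w : Fin N → ℝ}
    (hw : ∀ i, 0 < w i) (σ : Equiv.Perm (Fin N)) (hσ : ∀ i j : Fin N, i ≤ j → w (σ j) ≤ w (σ i))
    (A : (Fin N → ℝ) →ₗ[ℝ] (Fin m → ℝ)) :
    ∃ x ∈ wball ⊤ w ∩ LinearMap.ker A,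
      ∑ j ∈ univ.filter (fun j : Fin N => m ≤ (j : ℕ)), w (σ j) ^ 2 ≤ ∑ i, x i ^ 2 := by
  obtain ⟨x, hx, hcard⟩ := exists_mem_wball_ker_card_saturated hw A
  refine ⟨x, hx, ?_⟩
  let S : Finset (Fin N) := {i | |x i| = w i}
  calc ∑ j ∈ univ.filter (fun j : Fin N => m ≤ (j : ℕ)), w (σ j) ^ 2
      ≤ ∑ j ∈ S.map σ.symm.toEmbedding, w (σ j) ^ 2 :=
        sum_tail_le_sum_of_card_le hm (fun i j hij => pow_le_pow_left₀ (hw _).le (hσ i j hij) 2)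
          (fun _ => sq_nonneg _) (by simpa using hcard)
    _ = ∑ i ∈ S, x i ^ 2 := by
        rw [sum_map]
        refine sum_congr rfl fun i hi => ?_
        simp only [S, mem_filter, mem_univ, true_and] at hi
        simp [← hi]
    _ ≤ ∑ i, x i ^ 2 := sum_le_univ_sum_of_nonneg fun _ => sq_nonneg _

lemma sum_sq_le_sum_tail_of_mem_ker {N m : ℕ} (hm : m < N) {w : Fin N → ℝ} (hw : ∀ i, 0 < w i)
    (σ : Equiv.Perm (Fin N)) {x : Fin N → ℝ} (hx : x ∈ wball ⊤ w)
    (hker : LinearMap.funLeft ℝ ℝ (σ ∘ Fin.castLE hm.le) x = 0) :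
    ∑ i, x i ^ 2 ≤ ∑ j ∈ univ.filter (fun j : Fin N => m ≤ (j : ℕ)), w (σ j) ^ 2 := by
  have hx' := (mem_wball_top_iff hw).1 hx
  calc ∑ i, x i ^ 2 = ∑ j, x (σ j) ^ 2 := (Equiv.sum_comp σ _).symm
    _ = ∑ j ∈ univ.filter (fun j : Fin N => m ≤ (j : ℕ)), x (σ j) ^ 2 := by
        refine (sum_subset (subset_univ _) fun j _ hj => ?_).symm
        simp only [mem_filter, mem_univ, true_and, not_le] at hj
        simpa using congrFun hker ⟨j, hj⟩
    _ ≤ _ := sum_le_sum fun j _ => sq_le_sq' (abs_le.1 (hx' _)).1 (abs_le.1 (hx' _)).2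

lemma gelWidth_eq_of_forall_exists_le {N m : ℕ} {K : Set (Fin N → ℝ)}
    {nrm : (Fin N → ℝ) → ℝ} {B : ℝ} (hbdd : BddAbove (nrm '' K))
    (hlow : ∀ A : (Fin N → ℝ) →ₗ[ℝ] (Fin m → ℝ), ∃ x ∈ K ∩ LinearMap.ker A, B ≤ nrm x)
    (hup : ∃ A : (Fin N → ℝ) →ₗ[ℝ] (Fin m → ℝ), ∀ x ∈ K ∩ LinearMap.ker A, nrm x ≤ B) :
    gelWidth m K nrm = B := by
  have hle (A : (Fin N → ℝ) →ₗ[ℝ] (Fin m → ℝ)) :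
      B ≤ ⨆ x : (K ∩ (LinearMap.ker A : Set (Fin N → ℝ)) : Set (Fin N → ℝ)), nrm x := by
    obtain ⟨x, hx, hBx⟩ := hlow A
    have hbddA : BddAbove (Set.range fun y : ↥(K ∩ (LinearMap.ker A : Set (Fin N → ℝ))) =>
        nrm y) :=
      hbdd.mono (Set.range_subset_iff.2 fun y => Set.mem_image_of_mem nrm y.2.1)
    exact hBx.trans (le_ciSup hbddA ⟨x, hx⟩)
  refine IsLeast.csInf_eq ⟨?_, by rintro _ ⟨A, rfl⟩; exact hle A⟩
  obtain ⟨A, hA⟩ := hup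
  obtain ⟨x, hx, -⟩ := hlow A
  have : Nonempty ↥(K ∩ (LinearMap.ker A : Set (Fin N → ℝ))) := ⟨⟨x, hx⟩⟩
  exact ⟨A, le_antisymm (hle A) (ciSup_le fun y => hA y y.2)⟩

/-- if `w` is a vector of positive weights with nonincreasing
rearrangement `w ∘ σ` and `m < N`, then the Gelfand width satisfies
`d^m(B^∞_N(w), ℓ²_N) = (∑_{j=m+1}^N w_{(j)}²)^{1/2}`. -/
theorem statement8 {N m : ℕ} (hm : m < N) (w : Fin N → ℝ) (hw : ∀ i, 0 < w i)
    (σ : Equiv.Perm (Fin N)) (hσ : ∀ i j : Fin N, i ≤ j → w (σ j) ≤ w (σ i)) :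
    gelWidth m (wball ⊤ w) (wnorm 2 (fun _ => 1)) =
      (∑ j ∈ Finset.univ.filter (fun j : Fin N => m ≤ (j : ℕ)), w (σ j) ^ 2) ^ (1/2 : ℝ) := by
  rw [← Real.sqrt_eq_rpow]
  refine gelWidth_eq_of_forall_exists_le ⟨√(∑ i, w i ^ 2), ?_⟩ (fun A => ?_)
    ⟨LinearMap.funLeft ℝ ℝ (σ ∘ Fin.castLE hm.le), fun x hx => ?_⟩
  · rintro _ ⟨x, hx, rfl⟩
    have hx' := (mem_wball_top_iff hw).1 hx
    rw [wnorm_two_one]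
    exact Real.sqrt_le_sqrt (sum_le_sum fun i _ =>
      sq_le_sq' (abs_le.1 (hx' i)).1 (abs_le.1 (hx' i)).2)
  · obtain ⟨x, hx, hQ⟩ := exists_mem_wball_ker_sum_tail_le hm hw σ hσ A
    exact ⟨x, hx, wnorm_two_one x ▸ Real.sqrt_le_sqrt hQ⟩
  · rw [wnorm_two_one]
    exact Real.sqrt_le_sqrt (sum_sq_le_sum_tail_of_mem_ker hm hw σ hx.1 hx.2)

end
end
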